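/- Let A = (A_0, A_1, A_2, A_3) be a smooth g-valued potential on ℝ^{1+3} satisfying the Lorenz gauge condition ∂^μ A_μ = 0, and let φ be a smooth g-valued function. Then [∂_t A^α, ∂_α φ] = Q_{0i}[A^i, φ]. -/
import Mathlib


noncomputable section

open MeasureTheory Complex
open scoped FourierTransform RealInnerProductSpace BigOperators

/-! ## Basic setup: space-time `ℝ^{1+3}` and Fourier analytic toolbox -/

/-- Space-time `ℝ^{1+3}` (used both for physical points `(t,x)` and
Fourier variables `(τ,ξ)`); coordinate `0` is time. -/
abbrev SpaceTime : Type := EuclideanSpace ℝ (Fin 4)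

/-- Space `ℝ³`. -/
abbrev Space : Type := EuclideanSpace ℝ (Fin 3)

/-- The spatial part of a space-time point / frequency. -/
def spt (z : SpaceTime) : Space := (WithLp.equiv 2 (Fin 3 → ℝ)).symm fun i => z i.succ

/-- The space-time point `(t, x)`. -/
def stpt (t : ℝ) (x : Space) : SpaceTime :=
  (WithLp.equiv 2 (Fin 4 → ℝ)).symm fun μ => Fin.cases t (fun i => x i) μ

/-- Japanese bracket `⟨x⟩ = (1+x²)^{1/2}`. -/
def jap (x : ℝ) : ℝ := Real.sqrt (1 + x ^ 2)

/-- The sign `±1` encoded by a boolean (`true ↦ +1`). -/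
def sgnv (sg : Bool) : ℝ := if sg then 1 else -1

/-- Minkowski metric coefficient `η^{μμ}`, used to raise indices. -/
def mink (μ : Fin 4) : ℝ := if μ = 0 then -1 else 1

section Ops

variable {E : Type*} [NormedAddCommGroup E] [NormedSpace ℂ E]

/-- Space-time Fourier transform. -/
def FT (u : SpaceTime → E) : SpaceTime → E := fun ζ => 𝓕 u ζ

/-- Inverse space-time Fourier transform. -/
def FTinv (u : SpaceTime → E) : SpaceTime → E := fun x => 𝓕⁻ u x

/-- Spatial Fourier transform. -/
def FT3 (u : Space → E) : Space → E := fun ξ => 𝓕 u ξ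

/-- Inverse spatial Fourier transform. -/
def FT3inv (u : Space → E) : Space → E := fun x => 𝓕⁻ u x

/-- Weighted `L²`-norm (on the Fourier side). -/
def wnorm (w : SpaceTime → ℝ) (f : SpaceTime → E) : ℝ := (∫ ζ, (w ζ * ‖f ζ‖) ^ 2) ^ ((1:ℝ)/2)

/-- Finiteness of the weighted `L²`-norm. -/
def wfin (w : SpaceTime → ℝ) (f : SpaceTime → E) : Prop :=
  MeasureTheory.HasFiniteIntegral (fun ζ => (w ζ * ‖f ζ‖) ^ 2) volume

/-- The weight of the wave-Sobolev space `H^{s,b}`. -/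
def hWt (s b : ℝ) (ζ : SpaceTime) : ℝ := jap ‖spt ζ‖ ^ s * jap (|ζ 0| - ‖spt ζ‖) ^ b

/-- The weight of the space `X^{s,b}_±`. -/
def xWt (sg : Bool) (s b : ℝ) (ζ : SpaceTime) : ℝ :=
  jap ‖spt ζ‖ ^ s * jap (-(ζ 0) + sgnv sg * ‖spt ζ‖) ^ b

/-- The norm of the wave-Sobolev space `H^{s,b}`:
`‖u‖ = ‖⟨ξ⟩^s ⟨|τ|-|ξ|⟩^b ũ(τ,ξ)‖_{L²}`. -/
def HsbNorm (s b : ℝ) (u : SpaceTime → E) : ℝ := wnorm (hWt s b) (FT u)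

/-- Membership (finiteness of the norm) for `H^{s,b}`. -/
def HsbFin (s b : ℝ) (u : SpaceTime → E) : Prop := wfin (hWt s b) (FT u)

/-- The norm of `X^{s,b}_±` : `‖u‖ = ‖⟨ξ⟩^s ⟨-τ ± |ξ|⟩^b ũ(τ,ξ)‖_{L²}`. -/
def XsbNorm (sg : Bool) (s b : ℝ) (u : SpaceTime → E) : ℝ := wnorm (xWt sg s b) (FT u)

/-- Membership (finiteness of the norm) for `X^{s,b}_±`. -/
def XsbFin (sg : Bool) (s b : ℝ) (u : SpaceTime → E) : Prop := wfin (xWt sg s b) (FT u)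

/-- Fourier multiplier with (complex) symbol `m`. -/
def mult (m : SpaceTime → ℂ) (u : SpaceTime → E) : SpaceTime → E := FTinv fun ζ => m ζ • FT u ζ

/-- Fourier multiplier with real symbol `m`. -/
def rmult (m : SpaceTime → ℝ) (u : SpaceTime → E) : SpaceTime → E := mult (fun ζ => (m ζ : ℂ)) u

/-- `Λ^α`, the multiplier with symbol `⟨ξ⟩^α`. -/
def Lam (α : ℝ) (u : SpaceTime → E) : SpaceTime → E := rmult (fun ζ => jap ‖spt ζ‖ ^ α) u

/-- `Λ₊^α`, the multiplier with symbol `⟨|τ|+|ξ|⟩^α`. -/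
def LamPlus (α : ℝ) (u : SpaceTime → E) : SpaceTime → E := rmult (fun ζ => jap (|ζ 0| + ‖spt ζ‖) ^ α) u

/-- `Λ₋^α`, the multiplier with symbol `⟨|τ|-|ξ|⟩^α`. -/
def LamMinus (α : ℝ) (u : SpaceTime → E) : SpaceTime → E := rmult (fun ζ => jap (|ζ 0| - ‖spt ζ‖) ^ α) u

/-- `D^α`, the multiplier with symbol `|ξ|^α`. -/
def Dop (α : ℝ) (u : SpaceTime → E) : SpaceTime → E := rmult (fun ζ => ‖spt ζ‖ ^ α) u

/-- `D₊^α`, the multiplier with symbol `(|τ|+|ξ|)^α`. -/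
def DPlus (α : ℝ) (u : SpaceTime → E) : SpaceTime → E := rmult (fun ζ => (|ζ 0| + ‖spt ζ‖) ^ α) u

/-- `D₋^α`, the multiplier with symbol `||τ|-|ξ||^α`. -/
def DMinus (α : ℝ) (u : SpaceTime → E) : SpaceTime → E := rmult (fun ζ => |(|ζ 0| - ‖spt ζ‖)| ^ α) u

/-- `|∇|`, the multiplier with symbol `|ξ|`. -/
def absNabla (u : SpaceTime → E) : SpaceTime → E := Dop 1 u

/-- The partial derivative `∂_μ` on space-time. -/
def pd (μ : Fin 4) (u : SpaceTime → E) : SpaceTime → E := fun x => fderiv ℝ u x (EuclideanSpace.single μ 1)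

/-- The spatial partial derivative `∂_i` on `ℝ³`. -/
def pd3 (i : Fin 3) (u : Space → E) : Space → E := fun x => fderiv ℝ u x (EuclideanSpace.single i 1)

/-- The (inhomogeneous) Riesz transform `R_j = Λ^{-1} ∂_j`. -/
def Riesz (j : Fin 3) (u : SpaceTime → E) : SpaceTime → E := Lam (-1) (pd j.succ u)

/-- The d'Alembertian `□ = ∂_t² - Δ`. -/
def box (u : SpaceTime → E) : SpaceTime → E :=
  fun x => pd 0 (pd 0 u) x - ∑ j : Fin 3, pd j.succ (pd j.succ u) x

/-- The `F^s` norm, `‖u‖_{F^s} = ‖Λ₊ u‖_{H^{s-1,3/4+ε}}`. -/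
def FsNorm (ε s : ℝ) (u : SpaceTime → E) : ℝ := HsbNorm (s - 1) (3/4 + ε) (LamPlus 1 u)

/-- Membership in `F^s`. -/
def FsFin (ε s : ℝ) (u : SpaceTime → E) : Prop := HsbFin (s - 1) (3/4 + ε) (LamPlus 1 u)

/-- The `G^r` norm, `‖v‖_{G^r} = ‖Λ₊ v‖_{H^{r-1,1/2+ε}}`. -/
def GrNorm (ε r : ℝ) (v : SpaceTime → E) : ℝ := HsbNorm (r - 1) (1/2 + ε) (LamPlus 1 v)

/-- Membership in `G^r`. -/
def GrFin (ε r : ℝ) (v : SpaceTime → E) : Prop := HsbFin (r - 1) (1/2 + ε) (LamPlus 1 v)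

/-- The time slab `[0,T] × ℝ³`. -/
def slab (T : ℝ) : Set SpaceTime := {x | x 0 ∈ Set.Icc 0 T}

/-- `u` belongs to the restriction to `[0,T]` of the space with defining predicate `P`:
it has an extension lying in that space. -/
def MemRestrict (P : (SpaceTime → E) → Prop) (T : ℝ) (u : SpaceTime → E) : Prop :=
  ∃ U : SpaceTime → E, P U ∧ Set.EqOn U u (slab T)

/-- The spatial Sobolev `H^s(ℝ³)` norm. -/
def HNorm (s : ℝ) (f : Space → E) : ℝ :=
  (∫ ξ, (jap ‖ξ‖ ^ s * ‖FT3 f ξ‖) ^ 2) ^ ((1:ℝ)/2)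

/-- Membership in the spatial Sobolev space `H^s(ℝ³)`. -/
def MemHs (s : ℝ) (f : Space → E) : Prop :=
  MeasureTheory.HasFiniteIntegral (fun ξ => (jap ‖ξ‖ ^ s * ‖FT3 f ξ‖) ^ 2) volume

/-- Continuity with values in `H^s` on the time interval `[0,T]` (for a space-time function). -/
def ContHsOn (s T : ℝ) (u : SpaceTime → E) : Prop :=
  (∀ t ∈ Set.Icc (0:ℝ) T, MemHs s fun ξ => u (stpt t ξ)) ∧
  ∀ t ∈ Set.Icc (0:ℝ) T,
    Filter.Tendsto (fun t' => HNorm s fun ξ => u (stpt t' ξ) - u (stpt t ξ))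
      (nhdsWithin t (Set.Icc 0 T)) (nhds 0)

end Ops

/-- The angle weight `|∠(±₁ξ₁, ±₂ξ₂)|`. -/
def angleWt (sg1 sg2 : Bool) (η θ : SpaceTime) : ℝ :=
  |InnerProductGeometry.angle (sgnv sg1 • spt η) (sgnv sg2 • spt θ)|

/-- The bilinear null-form operator `B_{±₁,±₂}`, defined by its space-time Fourier transform
`𝓕(B(u,v))(ζ) = ∫ |∠(±₁ξ₁, ±₂ξ₂)| ũ(ζ₁) ṽ(ζ-ζ₁) dζ₁`. -/
def Bop (sg1 sg2 : Bool) (u v : SpaceTime → ℂ) : SpaceTime → ℂ :=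
  FTinv fun ζ => ∫ η, (angleWt sg1 sg2 η (ζ - η) : ℂ) * FT u η * FT v (ζ - η)

/-! ## Null forms -/

/-- The null form `Q₀(u,v) = ∂_α u ∂^α v`. -/
def Q0f (u v : SpaceTime → ℂ) : SpaceTime → ℂ := fun x => ∑ μ : Fin 4, mink μ • (pd μ u x * pd μ v x)

/-- The null form `Q_{αβ}(u,v) = ∂_α u ∂_β v - ∂_β u ∂_α v`. -/
def Qf (α β : Fin 4) (u v : SpaceTime → ℂ) : SpaceTime → ℂ :=
  fun x => pd α u x * pd β v x - pd β u x * pd α v x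

/-! ## Matrix-valued (Lie algebra) objects -/

/-- `n×n` complex matrices, the ambient space of `su(n,ℂ)`. -/
abbrev G (n : ℕ) : Type := Matrix (Fin n) (Fin n) ℂ

attribute [local instance] Matrix.frobeniusNormedAddCommGroup Matrix.frobeniusNormedSpace

/-- Membership in the Lie algebra `su(n,ℂ)` (trace-free skew-hermitian matrices). -/
def IsSu {n : ℕ} (X : G n) : Prop := X.conjTranspose = -X ∧ X.trace = 0

/-- The matrix commutator `[X,Y] = XY - YX`. -/
def mcomm {n : ℕ} (X Y : G n) : G n := X * Y - Y * X

/-- The commutator null form `Q_{αβ}[u,v] = [∂_α u, ∂_β v] - [∂_β u, ∂_α v]`. -/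
def Qc {n : ℕ} (α β : Fin 4) (u v : SpaceTime → G n) : SpaceTime → G n :=
  fun x => mcomm (pd α u x) (pd β v x) - mcomm (pd β u x) (pd α v x)

/-- The commutator null form `Q₀[u,v] = [∂_α u, ∂^α v]`. -/
def Q0c {n : ℕ} (u v : SpaceTime → G n) : SpaceTime → G n :=
  fun x => ∑ μ : Fin 4, mink μ • mcomm (pd μ u x) (pd μ v x)

/-! ## Dirac operators -/

/-- The spinor space `ℂ⁴`. -/
abbrev C4 : Type := EuclideanSpace ℂ (Fin 4)

/-- A `4×4` matrix acting on `ℂ⁴`. -/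
def matAct (M : Matrix (Fin 4) (Fin 4) ℂ) (v : C4) : C4 :=
  (WithLp.equiv 2 (Fin 4 → ℂ)).symm (M.mulVec ((WithLp.equiv 2 (Fin 4 → ℂ)) v))

/-- The Dirac matrices `α^0 = I`, `α^j = ((0,σ^j),(σ^j,0))`. -/
def alphaMat : Fin 4 → Matrix (Fin 4) (Fin 4) ℂ
  | 0 => 1
  | 1 => !![0,0,0,1; 0,0,1,0; 0,1,0,0; 1,0,0,0]
  | 2 => !![0,0,0,-I; 0,0,I,0; 0,-I,0,0; I,0,0,0]
  | 3 => !![0,0,1,0; 0,0,0,-1; 1,0,0,0; 0,-1,0,0]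

/-- Matrix-symbol Fourier multiplier on spinor fields (space-time). -/
def multM (m : SpaceTime → Matrix (Fin 4) (Fin 4) ℂ) (u : SpaceTime → C4) : SpaceTime → C4 :=
  FTinv fun ζ => matAct (m ζ) (FT u ζ)

/-- Matrix-symbol Fourier multiplier on spinor fields (space). -/
def multM3 (m : Space → Matrix (Fin 4) (Fin 4) ℂ) (u : Space → C4) : Space → C4 :=
  FT3inv fun ξ => matAct (m ξ) (FT3 u ξ)

/-- The symbol `Π(±ξ) = ½(I ± ξ_j α^j / |ξ|)` of the Dirac projections. -/
def PiSymb (sg : Bool) (ξ : Space) : Matrix (Fin 4) (Fin 4) ℂ :=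
  (2⁻¹ : ℂ) • (1 + ∑ j : Fin 3, ((sgnv sg * ξ j / ‖ξ‖ : ℝ) : ℂ) • alphaMat j.succ)

/-- The Dirac projection `Π_± = Π_±(∇/i)` (space-time version). -/
def PiProj (sg : Bool) (u : SpaceTime → C4) : SpaceTime → C4 := multM (fun ζ => PiSymb sg (spt ζ)) u

/-- The Dirac projection `Π_± = Π_±(∇/i)` acting on functions of the space variable. -/
def PiProj3 (sg : Bool) (u : Space → C4) : Space → C4 := multM3 (fun ξ => PiSymb sg ξ) u

/-- in the Lorenz gauge, `[∂_t A^α, ∂_α φ] = Q_{0i}[A^i, φ]`. -/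
theorem time_derivative_null_structure_identity {n : ℕ}
    (A : Fin 4 → SpaceTime → G n) (φ : SpaceTime → G n)
    (hA : ∀ μ, ContDiff ℝ (⊤ : ℕ∞) (A μ)) (hAg : ∀ μ x, IsSu (A μ x))
    (hφ : ContDiff ℝ (⊤ : ℕ∞) φ) (hφg : ∀ x, IsSu (φ x))
    (hLorenz : ∀ x, pd 0 (A 0) x = ∑ j : Fin 3, pd j.succ (A j.succ) x) :
    ∀ x : SpaceTime,
      -(mcomm (pd 0 (A 0) x) (pd 0 φ x))
          + ∑ j : Fin 3, mcomm (pd 0 (A j.succ) x) (pd j.succ φ x)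
        = ∑ i : Fin 3, Qc 0 i.succ (A i.succ) φ x := by
  intro x
  have h := hLorenz x
  simp only [Qc, mcomm, h, Finset.sum_mul, Finset.mul_sum, Finset.sum_sub_distrib]
  abel
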